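/- There exists an integer N₀ such that for all integers N ≥ N₀ the following holds: every real number s with 0 < s ≤ (1/(N−2))·(−1/2 + √(1/4 + 2(N−2))) is N-good. -/

import Mathlib

open Real Finset

/-- I_s = [(π−s)/2, (π+s)/2]. -/
noncomputable def Iset (s : ℝ) : Set ℝ := Set.Icc ((Real.pi - s) / 2) ((Real.pi + s) / 2)

/-- F(x₁,…,x_{2r}) = Σ_{m=1}^{r} cos(a_m)cos(b_m)·∏_{ℓ=1}^{m−1} sin(a_ℓ)sin(b_ℓ),
where a_m = x_{2m−1}, b_m = x_{2m}. -/
noncomputable def Fangle (a b : ℕ → ℝ) (r : ℕ) : ℝ :=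
  ∑ m ∈ Finset.Icc 1 r, Real.cos (a m) * Real.cos (b m) *
    ∏ l ∈ Finset.Icc 1 (m - 1), (Real.sin (a l) * Real.sin (b l))

/-- X(x₁,…,x_{2r}) = ∏_{m=1}^{r} sin(a_m)sin(b_m). -/
noncomputable def Xangle (a b : ℕ → ℝ) (r : ℕ) : ℝ :=
  ∏ m ∈ Finset.Icc 1 r, (Real.sin (a m) * Real.sin (b m))

/-- E(m,s) = m·sin²(s/2) − cos(s/2)^{2m} + sin(s/2). -/
noncomputable def Efun (m : ℕ) (s : ℝ) : ℝ :=
  (m : ℝ) * Real.sin (s / 2) ^ 2 - Real.cos (s / 2) ^ (2 * m) + Real.sin (s / 2)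

/-- G(N,j,x,s) = (N−j−2)·sin²(s/2) − sin(x/2)·cos(s/2)^{2(N−j−2)} + sin(s/2). -/
noncomputable def Gfun (N j : ℕ) (x s : ℝ) : ℝ :=
  ((N - j - 2 : ℕ) : ℝ) * Real.sin (s / 2) ^ 2
    - Real.sin (x / 2) * Real.cos (s / 2) ^ (2 * (N - j - 2)) + Real.sin (s / 2)

/-- The sequence s_N^{(j)}: s_N^{(0)} = inf{s > 0 : E(N−2,s) = 0},
s_N^{(j)} = inf{s > 0 : G(N,j,s_N^{(j−1)},s) = 0}. -/
noncomputable def sSeq (N : ℕ) : ℕ → ℝ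
  | 0 => sInf {s : ℝ | 0 < s ∧ Efun (N - 2) s = 0}
  | j + 1 => sInf {s : ℝ | 0 < s ∧ Gfun N (j + 1) (sSeq N j) s = 0}

/-- s is N-good: for all x₁,…,x_{2(N−2)} ∈ I_s,
I_s ⊆ α_{N−1,N}({x₁}×⋯×{x_{2(N−2)}}×(0,π)). -/
def NGood (N : ℕ) (s : ℝ) : Prop :=
  ∀ a b : ℕ → ℝ, (∀ m ∈ Finset.Icc 1 (N - 2), a m ∈ Iset s ∧ b m ∈ Iset s) →
    ∀ y ∈ Iset s, ∃ φ ∈ Set.Ioo (0 : ℝ) Real.pi,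
      Real.arccos (Fangle a b (N - 2) + Real.cos φ * Xangle a b (N - 2)) = y

/-- s is (N,j)-good: for all x₁,…,x_{2(N−j−2)} ∈ I_s,
I_s ⊆ α_{N−j−1,N−j}({x₁}×⋯×{x_{2(N−j−2)}}×I_{s_N^{(j−1)}}). -/
def NjGood (N j : ℕ) (s : ℝ) : Prop :=
  ∀ a b : ℕ → ℝ, (∀ m ∈ Finset.Icc 1 (N - j - 2), a m ∈ Iset s ∧ b m ∈ Iset s) →
    ∀ y ∈ Iset s, ∃ φ ∈ Iset (sSeq N (j - 1)),
      Real.arccos (Fangle a b (N - j - 2) + Real.cos φ * Xangle a b (N - j - 2)) = y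

/-!
With `r = N - 2` and `t = sin (s/2)`, every angle `x ∈ I_s` has `|cos x| ≤ t` and
`sin x ≥ cos (s/2)`. Hence `|F| ≤ r t²` and, by Bernoulli, `X ≥ cos (s/2)^{2r} ≥ 1 - r t²`, while
`|cos y| ≤ t` for the target `y ∈ I_s`. So `cos φ = (cos y - F) / X` lies strictly between `-1`
and `1` as soon as `2 r t² + t < 1`, and since `t < s/2` this follows from `r s² + s ≤ 2`, which is
exactly the bound on `s`.
-/

lemma abs_cos_le_sin_half_of_mem_Iset {s x : ℝ} (hs : s ≤ π) (hx : x ∈ Iset s) :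
    |cos x| ≤ sin (s / 2) := by
  obtain ⟨hx₁, hx₂⟩ := hx
  rw [← sin_pi_div_two_sub, abs_le, ← sin_neg]
  constructor <;> apply sin_le_sin_of_le_of_le_pi_div_two <;> linarith

lemma cos_half_le_sin_of_mem_Iset {s x : ℝ} (hs : s ≤ π) (hx : x ∈ Iset s) :
    cos (s / 2) ≤ sin x := by
  obtain ⟨hx₁, hx₂⟩ := hx
  have hdist : |π / 2 - x| ≤ s / 2 := abs_le.2 ⟨by linarith, by linarith⟩
  rw [← cos_pi_div_two_sub, ← cos_abs (π / 2 - x)]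
  exact cos_le_cos_of_nonneg_of_le_pi (abs_nonneg _) (by linarith) hdist

lemma one_sub_mul_sin_sq_le_cos_pow (r : ℕ) (u : ℝ) :
    1 - r * sin u ^ 2 ≤ cos u ^ (2 * r) := by
  rw [pow_mul, cos_sq']
  simpa [sub_eq_add_neg] using
    one_add_mul_le_pow (a := -sin u ^ 2) (by nlinarith [sin_sq_le_one u]) r

lemma abs_Fangle_le {a b : ℕ → ℝ} {r : ℕ} {t : ℝ}
    (h : ∀ m ∈ Icc 1 r, |cos (a m)| ≤ t ∧ |cos (b m)| ≤ t) :
    |Fangle a b r| ≤ r * t ^ 2 := by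
  have hprod : ∀ m, |∏ l ∈ Icc 1 (m - 1), (sin (a l) * sin (b l))| ≤ 1 := fun m => by
    rw [abs_prod]
    refine prod_le_one (fun _ _ => abs_nonneg _) fun l _ => ?_
    rw [abs_mul]
    exact mul_le_one₀ (abs_sin_le_one _) (abs_nonneg _) (abs_sin_le_one _)
  calc |Fangle a b r|
      ≤ ∑ m ∈ Icc 1 r, |cos (a m) * cos (b m) * ∏ l ∈ Icc 1 (m - 1), (sin (a l) * sin (b l))| :=
        abs_sum_le_sum_abs _ _
    _ ≤ ∑ _m ∈ Icc 1 r, t * t * 1 := by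
        refine sum_le_sum fun m hm => ?_
        obtain ⟨ha, hb⟩ := h m hm
        rw [abs_mul, abs_mul]
        have ht : 0 ≤ t := (abs_nonneg _).trans ha
        exact mul_le_mul (mul_le_mul ha hb (abs_nonneg _) ht) (hprod m) (abs_nonneg _)
          (by positivity)
    _ = r * t ^ 2 := by simp [sq]

lemma pow_le_Xangle {a b : ℕ → ℝ} {r : ℕ} {c : ℝ} (hc : 0 ≤ c)
    (h : ∀ m ∈ Icc 1 r, c ≤ sin (a m) ∧ c ≤ sin (b m)) :
    c ^ (2 * r) ≤ Xangle a b r := by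
  calc c ^ (2 * r) = ∏ _m ∈ Icc 1 r, c * c := by simp [pow_mul, sq]
    _ ≤ Xangle a b r :=
        prod_le_prod (fun _ _ => by positivity) fun m hm =>
          mul_le_mul (h m hm).1 (h m hm).2 hc (hc.trans (h m hm).1)

lemma exists_arccos_add_cos_mul_eq {F X y : ℝ} (hy₀ : 0 ≤ y) (hyπ : y ≤ π)
    (h : |cos y - F| < X) : ∃ φ ∈ Set.Ioo 0 π, arccos (F + cos φ * X) = y := by
  have hX : 0 < X := (abs_nonneg _).trans_lt h
  have hz : |(cos y - F) / X| < 1 := by rwa [abs_div, abs_of_pos hX, div_lt_one hX]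
  obtain ⟨hz₁, hz₂⟩ := abs_lt.1 hz
  refine ⟨arccos ((cos y - F) / X), ⟨arccos_pos.2 hz₂, ?_⟩, ?_⟩
  · exact (arccos_le_pi _).lt_of_ne fun hπ => (arccos_eq_pi.1 hπ).not_gt hz₁
  · rw [cos_arccos hz₁.le hz₂.le, div_mul_cancel₀ _ hX.ne', add_sub_cancel, arccos_cos hy₀ hyπ]

theorem NGood_of_two_mul_sin_sq_add_sin_lt_one {N : ℕ} {s : ℝ} (hs : s ≤ π)
    (h : 2 * ((N - 2 : ℕ) : ℝ) * sin (s / 2) ^ 2 + sin (s / 2) < 1) : NGood N s := by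
  intro a b hab y hy
  have hF := abs_Fangle_le fun m hm =>
    ⟨abs_cos_le_sin_half_of_mem_Iset hs (hab m hm).1,
      abs_cos_le_sin_half_of_mem_Iset hs (hab m hm).2⟩
  have hX := pow_le_Xangle (cos_nonneg_of_mem_Icc ⟨by linarith [hy.1, hy.2], by linarith⟩)
    fun m hm => ⟨cos_half_le_sin_of_mem_Iset hs (hab m hm).1,
      cos_half_le_sin_of_mem_Iset hs (hab m hm).2⟩
  have hcy := abs_cos_le_sin_half_of_mem_Iset hs hy
  refine exists_arccos_add_cos_mul_eq (by linarith [hy.1, hy.2]) (by linarith [hy.1, hy.2]) ?_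
  calc |cos y - Fangle a b (N - 2)| ≤ |cos y| + |Fangle a b (N - 2)| := abs_sub _ _
    _ < 1 - ((N - 2 : ℕ) : ℝ) * sin (s / 2) ^ 2 := by linarith
    _ ≤ cos (s / 2) ^ (2 * (N - 2)) := one_sub_mul_sin_sq_le_cos_pow _ _
    _ ≤ Xangle a b (N - 2) := hX

/-- `s ≤ (-1/2 + √(1/4 + 2r)) / r` says that `s` is at most the positive root of `r s² + s = 2`. -/
lemma mul_sq_add_le_two_of_le_quadratic_root {r s : ℝ} (hr : 0 < r) (hs : 0 ≤ s)
    (h : s ≤ 1 / r * (-1 / 2 + √(1 / 4 + 2 * r))) : r * s ^ 2 + s ≤ 2 := by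
  have hroot : r * s + 1 / 2 ≤ √(1 / 4 + 2 * r) := by
    rw [one_div_mul_eq_div, le_div_iff₀ hr] at h
    linarith
  have hsq := pow_le_pow_left₀ (by positivity) hroot 2
  rw [sq_sqrt (by positivity)] at hsq
  nlinarith

/-- for N large, every 0 < s ≤ (1/(N−2))(−1/2 + √(1/4 + 2(N−2))) is N-good. -/
theorem NGood_of_le_quadratic_root :
    ∃ N₀ : ℕ, ∀ N : ℕ, N₀ ≤ N → ∀ s : ℝ, 0 < s →
      s ≤ 1 / ((N : ℝ) - 2) * (-(1 : ℝ) / 2 + Real.sqrt (1 / 4 + 2 * ((N : ℝ) - 2))) →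
      NGood N s := by
  refine ⟨3, fun N hN s hs hsle => ?_⟩
  have hr : (1 : ℝ) ≤ ((N - 2 : ℕ) : ℝ) := by exact_mod_cast (by omega : 1 ≤ N - 2)
  rw [show (N : ℝ) - 2 = ((N - 2 : ℕ) : ℝ) by push_cast [Nat.cast_sub (by omega : 2 ≤ N)]; ring]
    at hsle
  have hquad := mul_sq_add_le_two_of_le_quadratic_root (by linarith) hs.le hsle
  have hs1 : s ≤ 1 := by nlinarith
  have ht₀ : 0 < sin (s / 2) := sin_pos_of_pos_of_lt_pi (by linarith) (by linarith [pi_gt_three])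
  have ht : sin (s / 2) < s / 2 := sin_lt (by linarith)
  refine NGood_of_two_mul_sin_sq_add_sin_lt_one (by linarith [pi_gt_three]) ?_
  nlinarith [mul_lt_mul_of_pos_left ht ht₀]
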